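/- arXiv:2001.06061 — 8 statements merged into one kernel-verified Lean document; each statement's English description precedes it below -/
import Mathlib

section
/- Let (R,σ) be a ring with involution having no zero divisors which is σ-Euclidean, with stathm Φ. Then for all a, b ∈ R with a·σ(b) ∈ R⁺ there exist g, s, t ∈ R such that: (i) g = a·σ(s) − b·σ(t); (ii) s·σ(t) ∈ R⁺; and (iii) g is a right greatest common divisor of a and b, i.e. a ∈ g·R and b ∈ g·R, and every r ∈ R with a ∈ r·R and b ∈ r·R satisfies g ∈ r·R. -/
/-!
Euclid's algorithm, twisted by the involution. If `a * σ b` and `q` are `σ`-fixed, then so is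
`b * σ (a - b * q) = σ (a * σ b) - b * q * σ b`, so the division step `(a, b) ↦ (b, a - b * q)`
stays among admissible pairs while the stathm of the second entry decreases. The two pairs have
the same right common divisors, and twisted Bézout coefficients `(s, t)` for the new pair give the
coefficients `(-t, -s - t * q)` for the old one, where `-t * σ (-s - t * q) = t * σ s + t * q * σ t`
is again `σ`-fixed.
-/

/-- A ring `R` with involution `σ` is `σ`-Euclidean if there are a well-ordered set `W`
and a stathm `Φ : R → W` such that for all `a b : R` with `b ≠ 0` and `a * σ b ∈ R⁺`
there is `q ∈ R⁺` with `Φ (a - b * q) < Φ b`. -/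
def SigmaEuclidean {R : Type*} [Ring R] (σ : R → R) : Prop :=
  ∃ (W : Type) (r : W → W → Prop) (Φ : R → W), IsWellOrder W r ∧
    ∀ a b : R, b ≠ 0 → σ (a * σ b) = a * σ b →
      ∃ q : R, σ q = q ∧ r (Φ (a - b * q)) (Φ b)

-- `g ∣ a` unfolds to `∃ u, a = g * u`, i.e. `a ∈ g * R`.
def IsRightGCD {M : Type*} [Monoid M] (g a b : M) : Prop :=
  g ∣ a ∧ g ∣ b ∧ ∀ r, r ∣ a → r ∣ b → r ∣ g

theorem isRightGCD_self_zero {M : Type*} [MonoidWithZero M] (a : M) : IsRightGCD a a 0 :=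
  ⟨dvd_rfl, dvd_zero a, fun _ hra _ => hra⟩

theorem IsRightGCD.of_sub_mul {R : Type*} [Ring R] {g a b q : R}
    (h : IsRightGCD g b (a - b * q)) : IsRightGCD g a b := by
  obtain ⟨hgb, hgab, hmax⟩ := h
  refine ⟨?_, hgb, fun r hra hrb => hmax r hrb (dvd_sub hra (hrb.mul_right q))⟩
  simpa using dvd_add hgab (hgb.mul_right q)

section StarRing

variable {R : Type*} [Ring R] [StarRing R]

def IsTwistedBezout (g a b s t : R) : Prop :=
  g = a * star s - b * star t ∧ IsSelfAdjoint (s * star t)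

theorem isTwistedBezout_self_zero (a : R) : IsTwistedBezout a a 0 1 0 :=
  ⟨by simp, by simp [IsSelfAdjoint]⟩

theorem IsTwistedBezout.of_sub_mul {g a b q s t : R} (hq : IsSelfAdjoint q)
    (h : IsTwistedBezout g b (a - b * q) s t) : IsTwistedBezout g a b (-t) (-s - t * q) := by
  obtain ⟨hg, hst⟩ := h
  refine ⟨?_, ?_⟩
  · rw [hg]
    simp only [star_neg, star_sub, star_mul, hq.star_eq]
    noncomm_ring
  · have hts : IsSelfAdjoint (t * star s) := by simpa using IsSelfAdjoint.star_iff.mpr hst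
    have hexpand : -t * star (-s - t * q) = t * star s + t * q * star t := by
      simp only [star_neg, star_sub, star_mul, hq.star_eq]
      noncomm_ring
    rw [hexpand]
    exact hts.add (hq.conjugate t)

theorem IsSelfAdjoint.mul_star_sub_mul {a b q : R} (hab : IsSelfAdjoint (a * star b))
    (hq : IsSelfAdjoint q) : IsSelfAdjoint (b * star (a - b * q)) := by
  have hba : IsSelfAdjoint (b * star a) := by simpa using IsSelfAdjoint.star_iff.mpr hab
  rw [star_sub, mul_sub, star_mul, hq.star_eq, ← mul_assoc]
  exact hba.sub (hq.conjugate b)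

theorem SigmaEuclidean.exists_isTwistedBezout_isRightGCD (heuc : SigmaEuclidean (star : R → R))
    (a b : R) (hab : IsSelfAdjoint (a * star b)) :
    ∃ g s t : R, IsTwistedBezout g a b s t ∧ IsRightGCD g a b := by
  obtain ⟨W, rel, Φ, hwo, hdiv⟩ := heuc
  induction b using (InvImage.wf Φ hwo.wf).induction generalizing a with
  | _ b ih =>
    by_cases hb : b = 0
    · subst hb
      exact ⟨a, 1, 0, isTwistedBezout_self_zero a, isRightGCD_self_zero a⟩
    · obtain ⟨q, hq, hlt⟩ := hdiv a b hb hab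
      obtain ⟨g, s, t, hbez, hgcd⟩ := ih (a - b * q) hlt b (hab.mul_star_sub_mul hq)
      exact ⟨g, -t, -s - t * q, hbez.of_sub_mul hq, hgcd.of_sub_mul⟩

end StarRing

theorem twisted_euclidean_gcd_general {R : Type*} [Ring R] (σ : R → R)
    (hadd : ∀ x y : R, σ (x + y) = σ x + σ y)
    (hmul : ∀ x y : R, σ (x * y) = σ y * σ x)
    (hinvol : ∀ x : R, σ (σ x) = x)
    (heuc : SigmaEuclidean σ) :
    ∀ a b : R, σ (a * σ b) = a * σ b →
      ∃ g s t : R,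
        g = a * σ s - b * σ t ∧
        σ (s * σ t) = s * σ t ∧
        (∃ u : R, a = g * u) ∧
        (∃ u : R, b = g * u) ∧
        (∀ r : R, (∃ u : R, a = r * u) → (∃ u : R, b = r * u) → ∃ u : R, g = r * u) := by
  let : StarRing R :=
    { star := σ, star_involutive := hinvol, star_mul := hmul, star_add := hadd }
  intro a b hab
  obtain ⟨g, s, t, ⟨hg, hst⟩, hga, hgb, hgcd⟩ := heuc.exists_isTwistedBezout_isRightGCD a b hab
  exact ⟨g, s, t, hg, hst, hga, hgb, hgcd⟩

/-- If `(R, σ)` is a ring with involution, without zero divisors, and is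
`σ`-Euclidean, then for all `a b : R` with `a * σ b` fixed by `σ` there exist
`g s t : R` with `g = a * σ s - b * σ t`, `s * σ t` fixed by `σ`, and `g` a right GCD
of `a` and `b`. -/
theorem twisted_euclidean_gcd {R : Type*} [Ring R] (σ : R → R)
    (hadd : ∀ x y : R, σ (x + y) = σ x + σ y)
    (hmul : ∀ x y : R, σ (x * y) = σ y * σ x)
    (hinvol : ∀ x : R, σ (σ x) = x)
    (hnzd : ∀ x y : R, x * y = 0 → x = 0 ∨ y = 0)
    (heuc : SigmaEuclidean σ) :
    ∀ a b : R, σ (a * σ b) = a * σ b →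
      ∃ g s t : R,
        g = a * σ s - b * σ t ∧
        σ (s * σ t) = s * σ t ∧
        (∃ u : R, a = g * u) ∧
        (∃ u : R, b = g * u) ∧
        (∀ r : R, (∃ u : R, a = r * u) → (∃ u : R, b = r * u) → ∃ u : R, g = r * u) :=
  twisted_euclidean_gcd_general σ hadd hmul hinvol heuc
end

section
/- Let (R,σ) be a ring with involution having no zero divisors which is σ-Euclidean. Then SL^σ(2,R) = E^σ(2,R); that is, a 2×2 matrix M over R satisfies M·σ̂(M) = σ̂(M)·M = 1 if and only if M is a finite product of the elementary matrices [[1,τ],[0,1]] (τ ∈ R⁺), [[u,0],[0,σ(u)⁻¹]] (u a unit of R), and [[0,1],[−1,0]]. -/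
/-- The twisted adjugate involution `σ̂` on 2×2 matrices over `R`. -/
def hatSigma {R : Type*} [Ring R] (σ : R → R) (M : Matrix (Fin 2) (Fin 2) R) :
    Matrix (Fin 2) (Fin 2) R :=
  !![σ (M 1 1), -σ (M 0 1); -σ (M 1 0), σ (M 0 0)]

/-- The set of elementary matrices generating `E^σ(2,R)`: upper unipotent matrices with
`σ`-fixed entry, diagonal matrices `[[u,0],[0,σ(u)⁻¹]]` for units `u`, and
`[[0,1],[-1,0]]`. -/
def ElemMatrices {R : Type*} [Ring R] (σ : R → R) : Set (Matrix (Fin 2) (Fin 2) R) :=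
  {M | ∃ τ : R, σ τ = τ ∧ M = !![1, τ; 0, 1]} ∪
  {M | ∃ u v : R, u * v = 1 ∧ v * u = 1 ∧ M = !![u, 0; 0, σ v]} ∪
  {!![0, 1; -1, 0]}

/-!
Since `σ̂` reverses products, the matrices with `M σ̂(M) = σ̂(M) M = 1` form a monoid, and the
generators lie in it. Conversely, for `M = [[a, b], [c, d]]` in `SL^σ(2,R)` the lower-left
entry of `M σ̂(M) = 1` says that `d σ(c)` is `σ`-fixed, so the Euclidean property gives
`q ∈ R⁺` with `Φ(d - c q) < Φ(c)`; multiplying `M` on the right by the generators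
`[[1, -q], [0, 1]]` and `[[0, -1], [1, 0]]` replaces `c` by `d - c q`. Well-founded induction
on `Φ(c)` reduces to `c = 0`, where `a σ(d) = σ(d) a = 1` and
`M = diag(a, d) · [[1, σ(d) b], [0, 1]]` with `σ(d) b ∈ R⁺`.
-/

section

variable {R : Type*} [Ring R] {σ : R → R}

lemma hatSigma_mul (hadd : ∀ x y : R, σ (x + y) = σ x + σ y)
    (hmul : ∀ x y : R, σ (x * y) = σ y * σ x) (M N : Matrix (Fin 2) (Fin 2) R) :
    hatSigma σ (M * N) = hatSigma σ N * hatSigma σ M := by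
  ext i j
  fin_cases i <;> fin_cases j <;>
    simp [hatSigma, Matrix.mul_apply, Fin.sum_univ_two, hadd, hmul] <;> abel

lemma map_one_of_involutive (hmul : ∀ x y : R, σ (x * y) = σ y * σ x)
    (hinvol : ∀ x : R, σ (σ x) = x) : σ 1 = 1 := by
  simpa [hinvol] using (hmul (σ 1) 1).symm

lemma hatSigma_one (hadd : ∀ x y : R, σ (x + y) = σ x + σ y) (h1 : σ 1 = 1) :
    hatSigma σ (1 : Matrix (Fin 2) (Fin 2) R) = 1 := by
  have h0 : σ 0 = 0 := (AddMonoidHom.mk' σ hadd).map_zero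
  ext i j
  fin_cases i <;> fin_cases j <;> simp [hatSigma, h0, h1]

def twistedSL (hadd : ∀ x y : R, σ (x + y) = σ x + σ y)
    (hmul : ∀ x y : R, σ (x * y) = σ y * σ x) (hinvol : ∀ x : R, σ (σ x) = x) :
    Submonoid (Matrix (Fin 2) (Fin 2) R) where
  carrier := {M | M * hatSigma σ M = 1 ∧ hatSigma σ M * M = 1}
  one_mem' := by simp [hatSigma_one hadd (map_one_of_involutive hmul hinvol)]
  mul_mem' {M N} hM hN := by
    constructor
    · rw [hatSigma_mul hadd hmul, mul_assoc, ← mul_assoc N, hN.1, one_mul, hM.1]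
    · rw [hatSigma_mul hadd hmul, mul_assoc, ← mul_assoc (hatSigma σ M), hM.2, one_mul, hN.2]

lemma upper_mem_closure_elemMatrices {τ : R} (hτ : σ τ = τ) :
    !![1, τ; 0, 1] ∈ Submonoid.closure (ElemMatrices σ) :=
  Submonoid.subset_closure (Or.inl (Or.inl ⟨τ, hτ, rfl⟩))

lemma antidiag_mem_closure_elemMatrices :
    !![0, 1; -1, 0] ∈ Submonoid.closure (ElemMatrices σ) :=
  Submonoid.subset_closure (Or.inr rfl)

lemma mem_closure_elemMatrices_of_reduction {M : Matrix (Fin 2) (Fin 2) R} {q : R}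
    (hq : σ q = q)
    (h : M * !![1, -q; 0, 1] * !![0, -1; 1, 0] ∈ Submonoid.closure (ElemMatrices σ)) :
    M ∈ Submonoid.closure (ElemMatrices σ) := by
  have hone : !![1, -q; 0, 1] * !![0, -1; 1, 0] * !![0, 1; -1, 0] * !![1, q; 0, 1] =
      (1 : Matrix (Fin 2) (Fin 2) R) := by
    simp [Matrix.one_fin_two]
  rw [← mul_one M, ← hone]
  simp only [← mul_assoc]
  exact Submonoid.mul_mem _ (Submonoid.mul_mem _ h antidiag_mem_closure_elemMatrices)
    (upper_mem_closure_elemMatrices hq)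

lemma reduction_lower_left (M : Matrix (Fin 2) (Fin 2) R) (q : R) :
    (M * !![1, -q; 0, 1] * !![0, -1; 1, 0] : Matrix (Fin 2) (Fin 2) R) 1 0 =
      M 1 1 - M 1 0 * q := by
  simp [Matrix.mul_apply, neg_add_eq_sub]

variable {hadd : ∀ x y : R, σ (x + y) = σ x + σ y}
    {hmul : ∀ x y : R, σ (x * y) = σ y * σ x} {hinvol : ∀ x : R, σ (σ x) = x}
    {M : Matrix (Fin 2) (Fin 2) R}

lemma elemMatrices_subset_twistedSL : ElemMatrices σ ⊆ twistedSL hadd hmul hinvol := by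
  have h0 : σ 0 = 0 := (AddMonoidHom.mk' σ hadd).map_zero
  have h1 : σ 1 = 1 := map_one_of_involutive hmul hinvol
  have hneg : ∀ x, σ (-x) = -σ x := (AddMonoidHom.mk' σ hadd).map_neg
  rintro M ((⟨τ, hτ, rfl⟩ | ⟨u, v, huv, hvu, rfl⟩) | rfl)
  · constructor <;> ext i j <;> fin_cases i <;> fin_cases j <;>
      simp [hatSigma, h0, h1, hτ]
  · have e1 : σ v * σ u = 1 := by rw [← hmul, huv, h1]
    have e2 : σ u * σ v = 1 := by rw [← hmul, hvu, h1]
    constructor <;> ext i j <;> fin_cases i <;> fin_cases j <;>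
      simp [hatSigma, h0, hinvol, huv, hvu, e1, e2]
  · constructor <;> ext i j <;> fin_cases i <;> fin_cases j <;>
      simp [hatSigma, h0, h1, hneg]

lemma closure_elemMatrices_le_twistedSL :
    Submonoid.closure (ElemMatrices σ) ≤ twistedSL hadd hmul hinvol :=
  Submonoid.closure_le.2 elemMatrices_subset_twistedSL

lemma mem_closure_elemMatrices_of_lower_left_eq_zero (hM : M ∈ twistedSL hadd hmul hinvol)
    (hc : M 1 0 = 0) : M ∈ Submonoid.closure (ElemMatrices σ) := by
  have h0 : σ 0 = 0 := (AddMonoidHom.mk' σ hadd).map_zero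
  obtain ⟨hM₁, hM₂⟩ := hM
  have e₁ := congrFun (congrFun hM₁ 0) 0
  have e₂ := congrFun (congrFun hM₂ 0) 0
  have e₃ := congrFun (congrFun hM₂ 0) 1
  simp [hatSigma, Matrix.mul_apply, hc, h0] at e₁ e₂ e₃
  have hτ : σ (σ (M 1 1) * M 0 1) = σ (M 1 1) * M 0 1 := by
    rw [hmul, hinvol]
    exact (eq_of_add_neg_eq_zero e₃).symm
  have hD : !![M 0 0, 0; 0, σ (σ (M 1 1))] ∈ Submonoid.closure (ElemMatrices σ) :=
    Submonoid.subset_closure (Or.inl (Or.inr ⟨_, _, e₁, e₂, rfl⟩))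
  have hfactor : M = !![M 0 0, 0; 0, σ (σ (M 1 1))] * !![1, σ (M 1 1) * M 0 1; 0, 1] := by
    ext i j
    fin_cases i <;> fin_cases j <;> simp [hinvol, hc, ← mul_assoc, e₁]
  rw [hfactor]
  exact Submonoid.mul_mem _ hD (upper_mem_closure_elemMatrices hτ)

lemma reduction_mem_twistedSL (hM : M ∈ twistedSL hadd hmul hinvol) {q : R} (hq : σ q = q) :
    M * !![1, -q; 0, 1] * !![0, -1; 1, 0] ∈ twistedSL hadd hmul hinvol := by
  have hU : !![1, -q; 0, 1] ∈ Submonoid.closure (ElemMatrices σ) :=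
    upper_mem_closure_elemMatrices (by
      rw [show σ (-q) = -σ q from (AddMonoidHom.mk' σ hadd).map_neg q, hq])
  have hT : !![0, -1; 1, 0] ∈ Submonoid.closure (ElemMatrices σ) := by
    have hS := antidiag_mem_closure_elemMatrices (σ := σ)
    have hcube : !![0, 1; -1, 0] * !![0, 1; -1, 0] * !![0, 1; -1, 0] =
        (!![0, -1; 1, 0] : Matrix (Fin 2) (Fin 2) R) := by
      simp
    exact hcube ▸ Submonoid.mul_mem _ (Submonoid.mul_mem _ hS hS) hS
  exact Submonoid.mul_mem _ (Submonoid.mul_mem _ hM (closure_elemMatrices_le_twistedSL hU))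
    (closure_elemMatrices_le_twistedSL hT)

lemma map_lower_right_mul_lower_left_of_mem_twistedSL (hM : M ∈ twistedSL hadd hmul hinvol) :
    σ (M 1 1 * σ (M 1 0)) = M 1 1 * σ (M 1 0) := by
  have e := congrFun (congrFun hM.1 1) 0
  simp [hatSigma, Matrix.mul_apply] at e
  rw [hmul, hinvol]
  exact eq_of_add_neg_eq_zero e

theorem twistedSL_le_closure_elemMatrices {W : Type*} (r : W → W → Prop) (hwf : WellFounded r)
    (Φ : R → W) (hdiv : ∀ a b : R, b ≠ 0 → σ (a * σ b) = a * σ b →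
      ∃ q : R, σ q = q ∧ r (Φ (a - b * q)) (Φ b)) :
    twistedSL hadd hmul hinvol ≤ Submonoid.closure (ElemMatrices σ) := by
  intro M hM
  induction hw : Φ (M 1 0) using hwf.induction generalizing M with
  | _ w ih =>
    by_cases hc : M 1 0 = 0
    · exact mem_closure_elemMatrices_of_lower_left_eq_zero hM hc
    obtain ⟨q, hq, hlt⟩ := hdiv _ _ hc (map_lower_right_mul_lower_left_of_mem_twistedSL hM)
    refine mem_closure_elemMatrices_of_reduction hq (ih _ ?_ (reduction_mem_twistedSL hM hq) rfl)
    rwa [reduction_lower_left, ← hw]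

end

theorem twisted_SL_eq_E_general {R : Type*} [Ring R] (σ : R → R)
    (hadd : ∀ x y : R, σ (x + y) = σ x + σ y)
    (hmul : ∀ x y : R, σ (x * y) = σ y * σ x)
    (hinvol : ∀ x : R, σ (σ x) = x)
    (heuc : SigmaEuclidean σ) :
    ∀ M : Matrix (Fin 2) (Fin 2) R,
      (M * hatSigma σ M = 1 ∧ hatSigma σ M * M = 1) ↔
        M ∈ Submonoid.closure (ElemMatrices σ) := by
  obtain ⟨W, r, Φ, hwo, hdiv⟩ := heuc
  have hSL : twistedSL hadd hmul hinvol = Submonoid.closure (ElemMatrices σ) :=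
    le_antisymm (twistedSL_le_closure_elemMatrices r hwo.wf Φ hdiv)
      closure_elemMatrices_le_twistedSL
  exact SetLike.ext_iff.1 hSL

/-- If `(R, σ)` is a ring with involution, without zero divisors, and is
`σ`-Euclidean, then `SL^σ(2,R) = E^σ(2,R)`: a matrix `M` satisfies
`M * σ̂(M) = σ̂(M) * M = 1` iff `M` is a finite product of elementary matrices. -/
theorem twisted_SL_eq_E {R : Type*} [Ring R] (σ : R → R)
    (hadd : ∀ x y : R, σ (x + y) = σ x + σ y)
    (hmul : ∀ x y : R, σ (x * y) = σ y * σ x)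
    (hinvol : ∀ x : R, σ (σ x) = x)
    (hnzd : ∀ x y : R, x * y = 0 → x = 0 ∨ y = 0)
    (heuc : SigmaEuclidean σ) :
    ∀ M : Matrix (Fin 2) (Fin 2) R,
      (M * hatSigma σ M = 1 ∧ hatSigma σ M * M = 1) ↔
        M ∈ Submonoid.closure (ElemMatrices σ) :=
  twisted_SL_eq_E_general σ hadd hmul hinvol heuc
end

section
/- Let (R′,σ) be a ring with involution having no zero divisors, and let R ⊆ R′ be a subring closed under σ such that R⁺ = (R′)⁺ (every σ-fixed element of R′ lies in R). If R′ is σ-Euclidean, then R is σ-Euclidean. -/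
/-- A subring `O` of a ring `R'`, with involution `σ` on `R'`, is `σ`-Euclidean if there
are a well-ordered set `W` and a stathm `Φ : O → W` such that for all `a b ∈ O` with
`b ≠ 0` and `a * σ b ∈ O⁺` there is `q ∈ O⁺` with `Φ (a - b * q) < Φ b`. -/
def SubringEuclidean {R' : Type*} [Ring R'] (σ : R' → R') (O : Subring R') : Prop :=
  ∃ (W : Type) (r : W → W → Prop) (Φ : O → W), IsWellOrder W r ∧
    ∀ a b : O, b ≠ 0 → ((a : R') * σ (b : R') ∈ O) →
      σ ((a : R') * σ (b : R')) = (a : R') * σ (b : R') →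
      ∃ q : O, σ (q : R') = (q : R') ∧ r (Φ (a - b * q)) (Φ b)

theorem subring_euclidean_of_euclidean_general {R' : Type*} [Ring R'] (σ : R' → R')
    (R : Subring R')
    (hfix : ∀ x : R', σ x = x → x ∈ R)
    (heuc : SigmaEuclidean σ) :
    SubringEuclidean σ R := by
  obtain ⟨W, r, Φ, hwo, hdiv⟩ := heuc
  refine ⟨W, r, fun x => Φ x, hwo, fun a b hb _ hab => ?_⟩
  obtain ⟨q, hq, hlt⟩ := hdiv a b (Subtype.coe_ne_coe.mpr hb) hab
  exact ⟨⟨q, hfix q hq⟩, hq, by simpa using hlt⟩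

/-- If `(R', σ)` is a ring with involution without zero divisors,
`R ⊆ R'` a subring closed under `σ` with `R⁺ = (R')⁺`, and `R'` is `σ`-Euclidean,
then `R` is `σ`-Euclidean. -/
theorem subring_euclidean_of_euclidean {R' : Type*} [Ring R'] (σ : R' → R')
    (hadd : ∀ x y : R', σ (x + y) = σ x + σ y)
    (hmul : ∀ x y : R', σ (x * y) = σ y * σ x)
    (hinvol : ∀ x : R', σ (σ x) = x)
    (hnzd : ∀ x y : R', x * y = 0 → x = 0 ∨ y = 0)
    (R : Subring R') (hclosed : ∀ x ∈ R, σ x ∈ R)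
    (hfix : ∀ x : R', σ x = x → x ∈ R)
    (heuc : SigmaEuclidean σ) :
    SubringEuclidean σ R :=
  subring_euclidean_of_euclidean_general σ R hfix heuc
end

section
/- Let (R′,σ) be a ring with involution having no zero divisors, and let R ⊆ R′ be a subring closed under σ such that (R,σ) is σ-Euclidean. If there exists a nonzero x ∈ R with x·R′ ⊆ R, then R⁺ = (R′)⁺: every σ-fixed element of R′ already lies in R. -/
section

variable {R' : Type*} [Ring R'] {σ : R' → R'} {O : Subring R'}

theorem fixed_mul_mul_apply (hmul : ∀ x y : R', σ (x * y) = σ y * σ x)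
    (hinvol : ∀ x : R', σ (σ x) = x) {b y : R'} (hy : σ y = y) :
    σ (b * y * σ b) = b * y * σ b := by
  rw [hmul, hinvol, hmul, hy, mul_assoc]

theorem SubringEuclidean.exists_wellFounded (heuc : SubringEuclidean σ O) :
    ∃ rel : O → O → Prop, WellFounded rel ∧
      ∀ a b : O, b ≠ 0 → (a : R') * σ b ∈ O → σ ((a : R') * σ b) = a * σ b →
        ∃ q : O, σ q = q ∧ rel (a - b * q) b := by
  obtain ⟨W, r, Φ, hwo, hdiv⟩ := heuc
  exact ⟨InvImage r Φ, InvImage.wf Φ hwo.wf, hdiv⟩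

theorem SubringEuclidean.mem_of_forall_mul_mem [NoZeroDivisors R'] (heuc : SubringEuclidean σ O)
    (hmul : ∀ x y : R', σ (x * y) = σ y * σ x) (hinvol : ∀ x : R', σ (σ x) = x)
    (hclosed : ∀ x ∈ O, σ x ∈ O) {y : R'} (hy : σ y = y) {x : R'} (hx0 : x ≠ 0)
    (hx : ∀ w, x * w ∈ O) : y ∈ O := by
  obtain ⟨rel, hwf, hdiv⟩ := heuc.exists_wellFounded
  suffices h : ∀ b : O, b ≠ 0 → (∀ w, (b : R') * w ∈ O) → y ∈ O by
    exact h ⟨x, by simpa using hx 1⟩ (fun h ↦ hx0 congr(Subtype.val $h)) hx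
  intro b
  induction b using hwf.induction with
  | _ b ih =>
    intro hb0 hb
    let a : O := ⟨b * y, hb y⟩
    obtain ⟨q, -, hlt⟩ := hdiv a b hb0 (O.mul_mem (hb y) (hclosed _ b.2))
      (fixed_mul_mul_apply hmul hinvol hy)
    have hrem : ((a - b * q : O) : R') = b * (y - q) := by
      rw [O.coe_sub, O.coe_mul, mul_sub]
    by_cases hzero : (b : R') * (y - q) = 0
    · have hyq : y = q :=
        sub_eq_zero.mp ((mul_eq_zero.mp hzero).resolve_left (by exact_mod_cast hb0))
      exact hyq ▸ q.2
    · refine ih _ hlt (fun h ↦ hzero (hrem ▸ congr(Subtype.val $h))) fun w ↦ ?_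
      rw [hrem, mul_assoc]
      exact hb _

end

theorem fixed_elements_in_euclidean_subring_general {R' : Type*} [Ring R'] (σ : R' → R')
    (hmul : ∀ x y : R', σ (x * y) = σ y * σ x)
    (hinvol : ∀ x : R', σ (σ x) = x)
    (hnzd : ∀ x y : R', x * y = 0 → x = 0 ∨ y = 0)
    (R : Subring R') (hclosed : ∀ x ∈ R, σ x ∈ R)
    (heuc : SubringEuclidean σ R)
    (hconduct : ∃ x : R', x ∈ R ∧ x ≠ 0 ∧ ∀ y : R', x * y ∈ R) :
    ∀ y : R', σ y = y → y ∈ R := by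
  intro y hy
  obtain ⟨x, -, hx0, hx⟩ := hconduct
  have : NoZeroDivisors R' := ⟨fun h ↦ hnzd _ _ h⟩
  exact heuc.mem_of_forall_mul_mem hmul hinvol hclosed hy hx0 hx

/-- If `(R', σ)` is a ring with involution without zero divisors,
`R ⊆ R'` a subring closed under `σ` which is `σ`-Euclidean, and there is a nonzero
`x ∈ R` with `x·R' ⊆ R`, then every `σ`-fixed element of `R'` lies in `R`. -/
theorem fixed_elements_in_euclidean_subring {R' : Type*} [Ring R'] (σ : R' → R')
    (hadd : ∀ x y : R', σ (x + y) = σ x + σ y)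
    (hmul : ∀ x y : R', σ (x * y) = σ y * σ x)
    (hinvol : ∀ x : R', σ (σ x) = x)
    (hnzd : ∀ x y : R', x * y = 0 → x = 0 ∨ y = 0)
    (R : Subring R') (hclosed : ∀ x ∈ R, σ x ∈ R)
    (heuc : SubringEuclidean σ R)
    (hconduct : ∃ x : R', x ∈ R ∧ x ≠ 0 ∧ ∀ y : R', x * y ∈ R) :
    ∀ y : R', σ y = y → y ∈ R :=
  fixed_elements_in_euclidean_subring_general σ hmul hinvol hnzd R hclosed heuc hconduct
end

section
/- Let (R′,σ) be a ring with involution having no zero divisors, and let R ⊆ R′ be a subring closed under σ such that (R,σ) is σ-Euclidean. If there exists a nonzero element k of the center of R′ with σ(k) = k and k·R′ ⊆ R, then R′ is σ-Euclidean. -/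
section AntiMultiplicative

variable {R' : Type*} [Ring R'] {σ : R' → R'} (hmul : ∀ x y : R', σ (x * y) = σ y * σ x)
include hmul

theorem mul_mul_sigma_mul_of_fixed {k : R'} (hk : σ k = k) (a b : R') :
    k * a * σ (k * b) = k * (a * σ b) * k := by
  rw [hmul, hk, mul_assoc, mul_assoc, mul_assoc]

theorem sigma_mul_mul_of_fixed {c x : R'} (hc : σ c = c) (hx : σ x = x) :
    σ (c * x * c) = c * x * c := by
  rw [hmul, hmul, hc, hx, mul_assoc]

end AntiMultiplicative

theorem euclidean_of_subring_euclidean_general {R' : Type*} [Ring R'] (σ : R' → R')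
    (hmul : ∀ x y : R', σ (x * y) = σ y * σ x)
    (hnzd : ∀ x y : R', x * y = 0 → x = 0 ∨ y = 0)
    (R : Subring R')
    (heuc : SubringEuclidean σ R)
    (k : R') (hk0 : k ≠ 0)
    (hkfix : σ k = k) (hkR : ∀ y : R', k * y ∈ R) :
    SigmaEuclidean σ := by
  obtain ⟨W, r, Φ, hwo, hΦ⟩ := heuc
  have : NoZeroDivisors R' := ⟨hnzd _ _⟩
  refine ⟨W, r, fun x => Φ ⟨k * x, hkR x⟩, hwo, fun a b hb hfix => ?_⟩
  have hkb : (⟨k * b, hkR b⟩ : R) ≠ 0 := fun h => mul_ne_zero hk0 hb (congrArg Subtype.val h)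
  have hscaled := mul_mul_sigma_mul_of_fixed hmul hkfix a b
  have hmem : k * a * σ (k * b) ∈ R := by
    rw [hscaled, mul_assoc]
    exact hkR _
  have hfix' : σ (k * a * σ (k * b)) = k * a * σ (k * b) := by
    rw [hscaled]
    exact sigma_mul_mul_of_fixed hmul hkfix hfix
  obtain ⟨q, hq, hlt⟩ := hΦ ⟨k * a, hkR a⟩ ⟨k * b, hkR b⟩ hkb hmem hfix'
  refine ⟨q, hq, ?_⟩
  have hdiff : (⟨k * a, hkR a⟩ - ⟨k * b, hkR b⟩ * q : R) = ⟨k * (a - b * q), hkR _⟩ :=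
    Subtype.ext (show k * a - k * b * q = k * (a - b * q) by rw [mul_sub, mul_assoc])
  rwa [hdiff] at hlt

/-- If `(R', σ)` is a ring with involution without zero divisors,
`R ⊆ R'` a subring closed under `σ` which is `σ`-Euclidean, and there is a nonzero
central σ-fixed `k ∈ R'` with `k·R' ⊆ R`, then `R'` is `σ`-Euclidean. -/
theorem euclidean_of_subring_euclidean {R' : Type*} [Ring R'] (σ : R' → R')
    (hadd : ∀ x y : R', σ (x + y) = σ x + σ y)
    (hmul : ∀ x y : R', σ (x * y) = σ y * σ x)
    (hinvol : ∀ x : R', σ (σ x) = x)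
    (hnzd : ∀ x y : R', x * y = 0 → x = 0 ∨ y = 0)
    (R : Subring R') (hclosed : ∀ x ∈ R, σ x ∈ R)
    (heuc : SubringEuclidean σ R)
    (k : R') (hk0 : k ≠ 0) (hkcentral : ∀ y : R', k * y = y * k)
    (hkfix : σ k = k) (hkR : ∀ y : R', k * y ∈ R) :
    SigmaEuclidean σ :=
  euclidean_of_subring_euclidean_general σ hmul hnzd R heuc k hk0 hkfix hkR
end

section
/- Let R > 0 be a real number, let z be a Hamilton quaternion with π_k(z) > 0, and let c, d be Hamilton quaternions such that c·(d^♯) is fixed by ♯. If nrm(c·z + d) < R, then nrm(c) < R / π_k(z)² and nrm(d) < (√R + √(nrm(c·z)))². -/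
/-!
The involution `♯` is `q ↦ k q̄ k⁻¹`, an anti-automorphism preserving `nrm` and negating `π_k`.
Hence `c d^♯` being `♯`-fixed means `π_k(d c^♯) = 0`, while `π_k(c z c^♯) = nrm(c) π_k(z)`.
Multiplying `c z + d` on the right by `c^♯` therefore gives a quaternion with `k`-component
`nrm(c) π_k(z)` and norm `nrm(c z + d) nrm(c)`, so `nrm(c)² π_k(z)² ≤ nrm(c z + d) nrm(c)`,
i.e. `nrm(c) π_k(z)² ≤ nrm(c z + d) < R`.
The bound on `nrm(d)` is the triangle inequality `‖d‖ ≤ ‖c z + d‖ + ‖c z‖`.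
-/

/-- The orthogonal involution `♯` on the Hamilton quaternions negating the `k`-component. -/
def qSharp (q : Quaternion ℝ) : Quaternion ℝ := ⟨q.re, q.imI, q.imJ, -q.imK⟩

open Quaternion

@[simp] lemma re_qSharp (q : ℍ[ℝ]) : (qSharp q).re = q.re := rfl
@[simp] lemma imI_qSharp (q : ℍ[ℝ]) : (qSharp q).imI = q.imI := rfl
@[simp] lemma imJ_qSharp (q : ℍ[ℝ]) : (qSharp q).imJ = q.imJ := rfl
@[simp] lemma imK_qSharp (q : ℍ[ℝ]) : (qSharp q).imK = -q.imK := rfl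

lemma qSharp_qSharp (q : ℍ[ℝ]) : qSharp (qSharp q) = q := by
  ext <;> simp

lemma qSharp_mul (a b : ℍ[ℝ]) : qSharp (a * b) = qSharp b * qSharp a := by
  ext <;> simp <;> ring

lemma normSq_qSharp (q : ℍ[ℝ]) : normSq (qSharp q) = normSq q := by
  simp [normSq_def']

lemma imK_eq_zero_of_qSharp_eq {q : ℍ[ℝ]} (h : qSharp q = q) : q.imK = 0 := by
  have := congrArg QuaternionAlgebra.imK h
  rw [imK_qSharp] at this
  linarith

lemma imK_mul_qSharp_eq_zero {c d : ℍ[ℝ]} (hcd : qSharp (c * qSharp d) = c * qSharp d) :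
    (d * qSharp c).imK = 0 := by
  rw [← qSharp_qSharp d, ← qSharp_mul, imK_qSharp, imK_eq_zero_of_qSharp_eq hcd, neg_zero]

lemma imK_mul_mul_qSharp (c z : ℍ[ℝ]) : (c * z * qSharp c).imK = normSq c * z.imK := by
  simp [normSq_def']
  ring

lemma sq_imK_le_normSq (q : ℍ[ℝ]) : q.imK ^ 2 ≤ normSq q := by
  rw [normSq_def']
  nlinarith [sq_nonneg q.re, sq_nonneg q.imI, sq_nonneg q.imJ]

lemma normSq_mul_sq_imK_le {c d : ℍ[ℝ]} (hcd : qSharp (c * qSharp d) = c * qSharp d) (z : ℍ[ℝ]) :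
    normSq c * z.imK ^ 2 ≤ normSq (c * z + d) := by
  have himK : ((c * z + d) * qSharp c).imK = normSq c * z.imK := by
    rw [add_mul, imK_add, imK_mul_mul_qSharp, imK_mul_qSharp_eq_zero hcd, add_zero]
  have hle : normSq c * (normSq c * z.imK ^ 2) ≤ normSq c * normSq (c * z + d) := by
    calc normSq c * (normSq c * z.imK ^ 2) = ((c * z + d) * qSharp c).imK ^ 2 := by
          rw [himK]; ring
      _ ≤ normSq ((c * z + d) * qSharp c) := sq_imK_le_normSq _
      _ = normSq c * normSq (c * z + d) := by rw [map_mul, normSq_qSharp, mul_comm]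
  rcases (normSq_nonneg (a := c)).eq_or_lt with hc | hc
  · rw [← hc, zero_mul]
    exact normSq_nonneg
  · exact le_of_mul_le_mul_left hle hc

lemma norm_lt_sqrt_add_norm {E : Type*} [SeminormedAddCommGroup E] {x y : E} {R : ℝ}
    (h : ‖x + y‖ ^ 2 < R) : ‖y‖ < √R + ‖x‖ :=
  calc ‖y‖ = ‖(x + y) - x‖ := by rw [add_sub_cancel_left]
    _ ≤ ‖x + y‖ + ‖x‖ := norm_sub_le _ _
    _ < √R + ‖x‖ := by gcongr; exact Real.lt_sqrt (norm_nonneg _) |>.mpr h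

lemma sqrt_normSq (q : ℍ[ℝ]) : √(normSq q) = ‖q‖ := by
  rw [normSq_eq_norm_mul_self, Real.sqrt_mul_self (norm_nonneg q)]

theorem trivial_bound_general (R : ℝ) (z : Quaternion ℝ) (hz : 0 < z.imK)
    (c d : Quaternion ℝ) (hcd : qSharp (c * qSharp d) = c * qSharp d)
    (hlt : Quaternion.normSq (c * z + d) < R) :
    Quaternion.normSq c < R / z.imK ^ 2 ∧
    Quaternion.normSq d <
      (Real.sqrt R + Real.sqrt (Quaternion.normSq (c * z))) ^ 2 := by
  refine ⟨?_, ?_⟩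
  · rw [lt_div_iff₀ (by positivity)]
    exact (normSq_mul_sq_imK_le hcd z).trans_lt hlt
  · rw [normSq_eq_norm_mul_self, ← sq] at hlt
    rw [normSq_eq_norm_mul_self, ← sq, sqrt_normSq]
    exact pow_lt_pow_left₀ (norm_lt_sqrt_add_norm hlt) (norm_nonneg d) two_ne_zero

/-- for `R > 0`, `z ∈ ℍ` with `π_k(z) > 0`, and `c, d ∈ ℍ` with `c·d^♯`
fixed by `♯`, if `nrm(c·z + d) < R` then `nrm(c) < R / π_k(z)²` and
`nrm(d) < (√R + √(nrm(c·z)))²`. -/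
theorem trivial_bound (R : ℝ) (hR : 0 < R) (z : Quaternion ℝ) (hz : 0 < z.imK)
    (c d : Quaternion ℝ) (hcd : qSharp (c * qSharp d) = c * qSharp d)
    (hlt : Quaternion.normSq (c * z + d) < R) :
    Quaternion.normSq c < R / z.imK ^ 2 ∧
    Quaternion.normSq d <
      (Real.sqrt R + Real.sqrt (Quaternion.normSq (c * z))) ^ 2 :=
  trivial_bound_general R z hz c d hcd hlt
end

section
/- Let z be a point of the hyperbolic upper half-plane with normSq(z) > 1, where normSq(z) = Re(z)² + Im(z)², and let z′ = −1/z (which again lies in the upper half-plane). Set z₀ = −2·Re(z)/(normSq(z) − 1) and r = √((normSq(z) + 1)² − 4·Im(z)²)/(normSq(z) − 1). Then for every point w of the upper half-plane, dist(w, z) = dist(w, z′) if and only if |w − z₀| = r; that is, the perpendicular bisector of the geodesic through z and −1/z is the circle with center z₀ and radius r. -/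
/-!
Since `cosh d(w, z) = 1 + |w - z|² / (2 Im w Im z)`, `Im (-1/z) = Im z / |z|²` and
`|w + 1/z| = |wz + 1| / |z|`, the point `w` is equidistant from `z` and `-1/z` iff
`|w - z|² = |wz + 1|²`. The difference
`|wz + 1|² - |w - z|² = (|z|² - 1)(|w|² - 1) + 4 Re z Re w` vanishes, for `|z| > 1`,
exactly on the circle `|w - z₀|² = z₀² + 1 = r²`.
-/

open UpperHalfPlane Complex

namespace Complex

theorem normSq_sub_neg_inv {z : ℂ} (hz : z ≠ 0) (w : ℂ) :
    normSq (w - -z⁻¹) = normSq (w * z + 1) / normSq z := by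
  rw [← normSq_div]
  congr 1
  field_simp
  ring

theorem normSq_mul_add_one_sub_normSq_sub (w z : ℂ) :
    normSq (w * z + 1) - normSq (w - z) =
      (normSq z - 1) * (normSq w - 1) + 4 * z.re * w.re := by
  simp only [normSq_apply, add_re, add_im, mul_re, mul_im, sub_re, sub_im, one_re, one_im]
  ring

theorem normSq_sub_eq_normSq_mul_add_one_iff {z : ℂ} (hz : 1 < normSq z) (w : ℂ) :
    normSq (w - z) = normSq (w * z + 1) ↔
      ‖w - ((-2 * z.re / (normSq z - 1) : ℝ) : ℂ)‖ =
        √((normSq z + 1) ^ 2 - 4 * z.im ^ 2) / (normSq z - 1) := by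
  have hN : 0 < normSq z - 1 := sub_pos.2 hz
  have hT : (normSq z + 1) ^ 2 - 4 * z.im ^ 2 = (normSq z - 1) ^ 2 + 4 * z.re ^ 2 := by
    rw [normSq_apply]; ring
  have key : normSq (w * z + 1) - normSq (w - z) = (normSq z - 1) *
      (‖w - ((-2 * z.re / (normSq z - 1) : ℝ) : ℂ)‖ ^ 2 -
        (√((normSq z + 1) ^ 2 - 4 * z.im ^ 2) / (normSq z - 1)) ^ 2) := by
    rw [normSq_mul_add_one_sub_normSq_sub, div_pow, hT, Real.sq_sqrt (by positivity),
      Complex.sq_norm, normSq_sub, normSq_ofReal, conj_ofReal, re_mul_ofReal]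
    field_simp
    ring
  rw [← sq_eq_sq₀ (norm_nonneg _) (by positivity), eq_comm, ← sub_eq_zero, key,
    mul_eq_zero_iff_left hN.ne', sub_eq_zero]

end Complex

namespace UpperHalfPlane

theorem dist_eq_dist_iff_normSq (w z₁ z₂ : ℍ) :
    dist w z₁ = dist w z₂ ↔
      normSq ((w : ℂ) - z₁) * z₂.im = normSq ((w : ℂ) - z₂) * z₁.im := by
  rw [← Real.cosh_strictMonoOn.injOn.eq_iff dist_nonneg dist_nonneg, cosh_dist, cosh_dist,
    Complex.dist_eq, Complex.dist_eq, Complex.sq_norm, Complex.sq_norm, add_right_inj,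
    div_eq_div_iff (by positivity) (by positivity)]
  field_simp

theorem dist_eq_dist_neg_inv_iff {w z z' : ℍ} (hz' : (z' : ℂ) = -(z : ℂ)⁻¹) :
    dist w z = dist w z' ↔ normSq ((w : ℂ) - z) = normSq ((w : ℂ) * z + 1) := by
  have hN : normSq (z : ℂ) ≠ 0 := normSq_eq_zero.not.2 z.ne_zero
  rw [dist_eq_dist_iff_normSq, ← coe_im z', hz', normSq_sub_neg_inv z.ne_zero, neg_im, inv_im,
    neg_div, neg_neg, mul_div_assoc', div_mul_eq_mul_div, div_left_inj' hN,
    coe_im, mul_left_inj' z.im_ne_zero]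

end UpperHalfPlane

/-- for `z` in the hyperbolic upper half-plane with `normSq z > 1` and
`z′ = -1/z`, the perpendicular bisector of the geodesic through `z` and `z′` is the
circle with center `z₀ = -2·Re(z)/(normSq z − 1)` and radius
`r = √((normSq z + 1)² − 4·Im(z)²)/(normSq z − 1)`. -/
theorem perpendicular_bisector (z z' : UpperHalfPlane)
    (hz : 1 < Complex.normSq (z : ℂ))
    (hz' : (z' : ℂ) = -((z : ℂ)⁻¹)) :
    ∀ w : UpperHalfPlane,
      dist w z = dist w z' ↔
        ‖((w : ℂ) -
            (((-2 * (z : ℂ).re / (Complex.normSq (z : ℂ) - 1)) : ℝ) : ℂ))‖ =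
          Real.sqrt ((Complex.normSq (z : ℂ) + 1) ^ 2 - 4 * (z : ℂ).im ^ 2) /
            (Complex.normSq (z : ℂ) - 1) := fun w => by
  rw [dist_eq_dist_neg_inv_iff hz', normSq_sub_eq_normSq_mul_add_one_iff hz]
end

section
/- Let H = (−1,−1/ℚ) be the rational Hamilton quaternions with orthogonal involution ♯(w + xi + yj + tk) = w + xi + yj − tk, and let O be the Hurwitz order, the ℤ-span of 1, i, j, (1 + i + j + k)/2. Then O is norm ♯-Euclidean: for all a, b ∈ O with b ≠ 0 and a·♯(b) ∈ O⁺, there exists q ∈ O⁺ with nrm(a − b·q) < nrm(b). -/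
/-- The reduced norm `nrm(z) = z·z̄` of a rational quaternion, as a rational number. -/
def qnrm {α β : ℚ} (q : QuaternionAlgebra ℚ α 0 β) : ℚ := (q * star q).re

/-- The orthogonal involution `♯` on a quaternion algebra negating the `k`-component. -/
def kSharp {R : Type*} [CommRing R] {c₁ c₂ : R} (q : QuaternionAlgebra R c₁ 0 c₂) :
    QuaternionAlgebra R c₁ 0 c₂ := ⟨q.re, q.imI, q.imJ, -q.imK⟩

/-- The Hurwitz order: the `ℤ`-span of `1, i, j, (1 + i + j + k)/2` in `(−1,−1/ℚ)`. -/
def HurwitzOrder : Submodule ℤ (QuaternionAlgebra ℚ (-1) 0 (-1)) :=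
  Submodule.span ℤ
    {(1 : QuaternionAlgebra ℚ (-1) 0 (-1)), ⟨0, 1, 0, 0⟩, ⟨0, 0, 1, 0⟩,
      ⟨1/2, 1/2, 1/2, 1/2⟩}

/-!
The quotient can already be taken in the sublattice `ℤ + ℤi + ℤj` of `O⁺`. Put `n = nrm(b)` and
`c = b̄a`; then `b̄(a - bq) = c - nq`, so `nrm(a - bq) < n` amounts to `nrm(c - nq) < n²`.
The `♯`-symmetry of `a·♯(b)` says that `c` has no `k`-component, so rounding the three remaining
coordinates of `c/n` gives `q` with `nrm(c - nq) ≤ 3n²/4`.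
-/

open Quaternion

section Sharp

variable {R : Type*} [CommRing R] {c₁ c₂ : R}

theorem kSharp_eq_self_iff [NoZeroDivisors R] [CharZero R] {x : QuaternionAlgebra R c₁ 0 c₂} :
    kSharp x = x ↔ x.imK = 0 := by
  rw [← CharZero.neg_eq_self_iff]
  constructor
  · exact fun h => congrArg QuaternionAlgebra.imK h
  · intro h
    ext <;> simp [kSharp, h]

theorem imK_star_mul (a b : QuaternionAlgebra R c₁ 0 c₂) :
    (star b * a).imK = (a * kSharp b).imK := by
  simp only [kSharp, QuaternionAlgebra.imK_mul, QuaternionAlgebra.re_star,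
    QuaternionAlgebra.imI_star, QuaternionAlgebra.imJ_star, QuaternionAlgebra.imK_star]
  ring

end Sharp

theorem sq_sub_mul_round_div_le {K : Type*} [Field K] [LinearOrder K] [IsStrictOrderedRing K]
    [FloorRing K] (x : K) {n : K} (hn : 0 < n) :
    (x - n * round (x / n)) ^ 2 ≤ (n / 2) ^ 2 := by
  have habs : |x - n * round (x / n)| ≤ n / 2 := by
    have hscale : x - n * round (x / n) = n * (x / n - round (x / n)) := by
      field_simp
    rw [hscale, abs_mul, abs_of_pos hn]
    linarith [mul_le_mul_of_nonneg_left (abs_sub_round (x / n)) hn.le]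
  simpa [sq_abs] using pow_le_pow_left₀ (abs_nonneg _) habs 2

-- `qnrm` is definitionally `Quaternion.normSq`, whose theory we borrow.
theorem qnrm_eq_sum_sq (x : ℍ[ℚ,-1,-1]) :
    qnrm x = x.re ^ 2 + x.imI ^ 2 + x.imJ ^ 2 + x.imK ^ 2 :=
  normSq_def' x

theorem qnrm_mul (x y : ℍ[ℚ,-1,-1]) : qnrm (x * y) = qnrm x * qnrm y :=
  map_mul normSq x y

theorem qnrm_star (x : ℍ[ℚ,-1,-1]) : qnrm (star x) = qnrm x :=
  normSq_star x

theorem qnrm_pos {x : ℍ[ℚ,-1,-1]} (hx : x ≠ 0) : 0 < qnrm x :=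
  normSq_nonneg.lt_of_ne' (normSq_ne_zero.mpr hx)

theorem star_mul_self_eq_qnrm (x : ℍ[ℚ,-1,-1]) : star x * x = qnrm x :=
  star_mul_self x

theorem qnrm_sub_mul_lt_iff {a b : ℍ[ℚ,-1,-1]} (hb : b ≠ 0) (q : ℍ[ℚ,-1,-1]) :
    qnrm (a - b * q) < qnrm b ↔ qnrm (star b * a - qnrm b • q) < qnrm b ^ 2 := by
  have hfactor : star b * a - qnrm b • q = star b * (a - b * q) := by
    rw [mul_sub, ← mul_assoc, star_mul_self_eq_qnrm, QuaternionAlgebra.coe_mul_eq_smul]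
  rw [hfactor, qnrm_mul, qnrm_star, sq]
  exact (mul_lt_mul_iff_right₀ (qnrm_pos hb)).symm

theorem exists_qnrm_sub_smul_lt (c : ℍ[ℚ,-1,-1]) (hc : c.imK = 0) {n : ℚ} (hn : 0 < n) :
    ∃ r₀ r₁ r₂ : ℤ, qnrm (c - n • ⟨r₀, r₁, r₂, 0⟩) < n ^ 2 := by
  refine ⟨round (c.re / n), round (c.imI / n), round (c.imJ / n), ?_⟩
  rw [qnrm_eq_sum_sq]
  simp only [QuaternionAlgebra.re_sub, QuaternionAlgebra.imI_sub, QuaternionAlgebra.imJ_sub,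
    QuaternionAlgebra.imK_sub, QuaternionAlgebra.re_smul, QuaternionAlgebra.imI_smul,
    QuaternionAlgebra.imJ_smul, QuaternionAlgebra.imK_smul, smul_eq_mul, hc, mul_zero, sub_zero]
  nlinarith [sq_sub_mul_round_div_le c.re hn, sq_sub_mul_round_div_le c.imI hn,
    sq_sub_mul_round_div_le c.imJ hn]

theorem mk_intCast_mem_hurwitzOrder (r₀ r₁ r₂ : ℤ) :
    (⟨r₀, r₁, r₂, 0⟩ : ℍ[ℚ,-1,-1]) ∈ HurwitzOrder := by
  have hcomb : (⟨r₀, r₁, r₂, 0⟩ : ℍ[ℚ,-1,-1]) = r₀ • (1 : ℍ[ℚ,-1,-1]) + r₁ • ⟨0, 1, 0, 0⟩ + r₂ • ⟨0, 0, 1, 0⟩ := by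
    ext <;> simp
  rw [hcomb]
  refine add_mem (add_mem ?_ ?_) ?_ <;>
    exact Submodule.smul_mem _ _ (Submodule.subset_span (by simp))

/-- the Hurwitz order in `(−1,−1/ℚ)` with the involution `♯` negating the
`k`-component is norm `♯`-Euclidean. -/
theorem hurwitz_norm_sharp_euclidean :
    ∀ a b : QuaternionAlgebra ℚ (-1) 0 (-1), a ∈ HurwitzOrder → b ∈ HurwitzOrder →
      b ≠ 0 → a * kSharp b ∈ HurwitzOrder → kSharp (a * kSharp b) = a * kSharp b →
      ∃ q ∈ HurwitzOrder, kSharp q = q ∧ qnrm (a - b * q) < qnrm b := by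
  intro a b _ _ hb _ hsym
  have hc : (star b * a).imK = 0 := (imK_star_mul a b).trans (kSharp_eq_self_iff.mp hsym)
  obtain ⟨r₀, r₁, r₂, hr⟩ := exists_qnrm_sub_smul_lt (star b * a) hc (qnrm_pos hb)
  exact ⟨⟨r₀, r₁, r₂, 0⟩, mk_intCast_mem_hurwitzOrder r₀ r₁ r₂, kSharp_eq_self_iff.mpr rfl,
    (qnrm_sub_mul_lt_iff hb _).mpr hr⟩
end
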